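/- arXiv:1505.01440 — 4 statements merged into one kernel-verified Lean document; each statement's English description precedes it below -/
import Mathlib

section
/- Let K be an n×n real matrix with nonnegative off-diagonal entries and zero column sums. Then K has no nonzero purely imaginary eigenvalue: if λ is an eigenvalue of K with Re λ = 0, then λ = 0. -/
open Real Matrix

theorem metzler_zero_colsum_no_imaginary_eigenvalue
    (n : ℕ) (K : Matrix (Fin n) (Fin n) ℝ)
    (hoff : ∀ i j, i ≠ j → 0 ≤ K i j)
    (hcol : ∀ j, ∑ i, K i j = 0)
    (lam : ℂ)
    (hlam : lam ∈ spectrum ℂ (K.map (algebraMap ℝ ℂ)))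
    (hre : lam.re = 0) :
    lam = 0 := by
  set M := K.map (algebraMap ℝ ℂ) with hM
  -- the transpose has the same spectrum
  have htrans : lam ∈ spectrum ℂ Mᵀ := by
    rw [spectrum.mem_iff, Matrix.isUnit_iff_isUnit_det] at hlam ⊢
    have hdet : (algebraMap ℂ (Matrix (Fin n) (Fin n) ℂ) lam - Mᵀ).det
        = (algebraMap ℂ (Matrix (Fin n) (Fin n) ℂ) lam - M).det := by
      rw [← Matrix.det_transpose (algebraMap ℂ (Matrix (Fin n) (Fin n) ℂ) lam - M)]
      congr 1
      rw [Matrix.transpose_sub, Matrix.algebraMap_eq_diagonal, Matrix.diagonal_transpose]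
    rwa [hdet]
  -- Gershgorin
  have heig : Module.End.HasEigenvalue (Matrix.toLin' Mᵀ) lam := by
    have hspec := AlgEquiv.spectrum_eq (Matrix.toLinAlgEquiv' (R := ℂ) (n := Fin n)) Mᵀ
    have hmem : lam ∈ spectrum ℂ (Matrix.toLinAlgEquiv' Mᵀ) := by rw [hspec]; exact htrans
    have := Module.End.hasEigenvalue_iff_mem_spectrum.mpr hmem
    exact this
  obtain ⟨k, hk⟩ := eigenvalue_mem_ball heig
  rw [Metric.mem_closedBall, Complex.dist_eq] at hk
  -- compute the center and the radius
  have hdiag : K k k = -∑ i ∈ Finset.univ.erase k, K i k := by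
    have := hcol k
    rw [← Finset.add_sum_erase _ _ (Finset.mem_univ k)] at this
    linarith
  have hradius : ∑ j ∈ Finset.univ.erase k, ‖Mᵀ k j‖ = ∑ i ∈ Finset.univ.erase k, K i k := by
    apply Finset.sum_congr rfl
    intro j hj
    have hjk : j ≠ k := (Finset.mem_erase.mp hj).1
    have : Mᵀ k j = ((K j k : ℝ) : ℂ) := by simp [hM, Matrix.transpose_apply, Matrix.map_apply]
    rw [this, Complex.norm_real, Real.norm_eq_abs, abs_of_nonneg (hoff j k hjk)]
  have hcenter : Mᵀ k k = ((K k k : ℝ) : ℂ) := by simp [hM, Matrix.transpose_apply, Matrix.map_apply]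
  rw [hcenter, hradius, hdiag] at hk
  set r : ℝ := ∑ i ∈ Finset.univ.erase k, K i k with hr
  have hrnn : 0 ≤ r := Finset.sum_nonneg fun i hi => hoff i k (Finset.mem_erase.mp hi).1
  -- |lam + r| ≤ r with Re lam = 0 forces lam = 0
  have habs : ‖lam + r‖ ≤ r := by
    have : lam - ((-r : ℝ) : ℂ) = lam + r := by push_cast; ring
    rwa [show ((-r : ℝ) : ℂ) = ((-r : ℝ) : ℂ) from rfl, this] at hk
  have hsq : ‖lam + r‖ ^ 2 ≤ r ^ 2 := by
    have := norm_nonneg (lam + r)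
    nlinarith
  rw [Complex.sq_norm, Complex.normSq_apply] at hsq
  simp only [Complex.add_re, Complex.add_im, Complex.ofReal_re, Complex.ofReal_im, hre] at hsq
  have him : lam.im = 0 := by nlinarith
  exact Complex.ext hre him
end

section
/- Let K be an n×n real matrix with nonnegative off-diagonal entries and zero column sums. Then there exists a vector P* in the simplex Δ_n (P* has nonnegative entries summing to 1) such that K P* = 0. -/
open Real Matrix Set

theorem exists_perron_equilibrium
    (n : ℕ) (hn : 1 ≤ n) (K : Matrix (Fin n) (Fin n) ℝ)
    (hoff : ∀ i j, i ≠ j → 0 ≤ K i j)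
    (hcol : ∀ j, ∑ i, K i j = 0) :
    ∃ P : Fin n → ℝ, (∀ i, 0 ≤ P i) ∧ ∑ i, P i = 1 ∧ K.mulVec P = 0 := by
  classical
  -- the linear map x ↦ (Kx, ∑ x)
  set L : (Fin n → ℝ) →ₗ[ℝ] (Fin n → ℝ) × ℝ :=
    { toFun := fun x => (K.mulVec x, ∑ i, x i)
      map_add' := by
        intro x y
        simp [Matrix.mulVec_add, Finset.sum_add_distrib]
      map_smul' := by
        intro c x
        simp [Matrix.mulVec_smul, Finset.mul_sum, Prod.smul_mk, smul_eq_mul] } with hLdef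
  have hLapp : ∀ x, L x = (K.mulVec x, ∑ i, x i) := fun x => rfl
  have hLc : Continuous L := L.continuous_of_finiteDimensional
  set T : Set (Fin n → ℝ) := {x | ∀ i, 0 ≤ x i} with hTdef
  have hTconv : Convex ℝ T := by
    intro x hx y hy a b ha hb _ i
    exact add_nonneg (mul_nonneg ha (hx i)) (mul_nonneg hb (hy i))
  set S : Set ((Fin n → ℝ) × ℝ) := L '' T with hSdef
  have hSconv : Convex ℝ S := hTconv.linear_image L
  -- Step A: (0,1) ∈ closure S, by Hahn-Banach separation
  have hA : ((0 : Fin n → ℝ), (1 : ℝ)) ∈ closure S := by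
    by_contra hnot
    obtain ⟨f, u, hfb, hfx⟩ :=
      geometric_hahn_banach_closed_point hSconv.closure isClosed_closure hnot
    have h0S : (0 : (Fin n → ℝ) × ℝ) ∈ S := ⟨0, fun i => le_refl 0, by simp [hLapp]⟩
    have hu0 : 0 < u := by
      have := hfb 0 (subset_closure h0S)
      simpa using this
    have hscale : ∀ x ∈ T, f (L x) ≤ 0 := by
      intro x hx
      by_contra h'
      push_neg at h'
      have hlam : (0:ℝ) ≤ (u + 1) / f (L x) := by positivity
      have hmem : ((u + 1) / f (L x)) • x ∈ T := fun i => mul_nonneg hlam (hx i)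
      have hdm : ((u + 1) / f (L x)) * f (L x) = u + 1 := div_mul_cancel₀ _ (ne_of_gt h')
      have h2 := hfb (L (((u + 1) / f (L x)) • x)) (subset_closure ⟨_, hmem, rfl⟩)
      rw [_root_.map_smul, _root_.map_smul, smul_eq_mul, hdm] at h2
      linarith
    set g : Fin n → ℝ := fun i => f (Pi.single i 1, 0) with hgdef
    set c : ℝ := f (0, 1) with hcdef
    have hc0 : 0 < c := lt_trans hu0 hfx
    -- decomposition of f
    have hdecomp : ∀ (z : Fin n → ℝ) (t : ℝ), f (z, t) = (∑ i, z i * g i) + t * c := by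
      intro z t
      have hz : (z, t) = (∑ i, z i • ((Pi.single i 1 : Fin n → ℝ), (0:ℝ))) + t • ((0 : Fin n → ℝ), (1:ℝ)) := by
        apply Prod.ext
        · simp only [Prod.fst_sum, Prod.smul_mk, Prod.fst_add, Prod.smul_fst, Prod.mk_add_mk]
          funext j
          simp [Finset.sum_apply, Pi.single_apply, mul_ite]
        · simp [Prod.snd_sum]
      rw [hz, map_add, map_sum, _root_.map_smul]
      simp only [_root_.map_smul, smul_eq_mul]
      rfl
    have hj : ∀ j, (∑ i, K i j * g i) + c ≤ 0 := by
      intro j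
      have hmem : (Pi.single j 1 : Fin n → ℝ) ∈ T := fun i => by
        rcases eq_or_ne i j with rfl | h
        · simp
        · simp [Pi.single_apply, h]
      have := hscale _ hmem
      rw [hLapp] at this
      rw [hdecomp] at this
      simpa [Matrix.mulVec_single, Pi.single_apply] using this
    -- argmin
    obtain ⟨j, -, hjmin⟩ := Finset.exists_min_image Finset.univ g
      ⟨⟨0, hn⟩, Finset.mem_univ _⟩
    have hge : (0:ℝ) ≤ ∑ i, K i j * g i := by
      have h1 : ∑ i, K i j * g j ≤ ∑ i, K i j * g i := by
        apply Finset.sum_le_sum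
        intro i _
        rcases eq_or_ne i j with rfl | h
        · exact le_refl _
        · exact mul_le_mul_of_nonneg_left (hjmin i (Finset.mem_univ i)) (hoff i j h)
      calc (0:ℝ) = (∑ i, K i j) * g j := by rw [hcol j]; ring
        _ = ∑ i, K i j * g j := by rw [Finset.sum_mul]
        _ ≤ ∑ i, K i j * g i := h1
    linarith [hj j]
  -- Step B: extraction via compactness
  set D : Set (Fin n → ℝ) := {x | (∀ i, 0 ≤ x i) ∧ ∑ i, x i ≤ 2} with hDdef
  have hDclosed : IsClosed D := by
    have h1 : IsClosed {x : Fin n → ℝ | ∀ i, 0 ≤ x i} := by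
      have : {x : Fin n → ℝ | ∀ i, 0 ≤ x i} = ⋂ i, {x | 0 ≤ x i} := by
        ext x; simp
      rw [this]
      exact isClosed_iInter fun i => isClosed_le continuous_const (continuous_apply i)
    have h2 : IsClosed {x : Fin n → ℝ | ∑ i, x i ≤ 2} :=
      isClosed_le (continuous_finset_sum _ fun i _ => continuous_apply i) continuous_const
    exact h1.inter h2
  have hDsub : D ⊆ Set.univ.pi fun _ : Fin n => Icc (0:ℝ) 2 := by
    intro x hx
    intro i _
    refine ⟨hx.1 i, ?_⟩
    calc x i ≤ ∑ j, x j := Finset.single_le_sum (fun j _ => hx.1 j) (Finset.mem_univ i)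
      _ ≤ 2 := hx.2
  have hDcomp : IsCompact D :=
    (isCompact_univ_pi fun _ => isCompact_Icc).of_isClosed_subset hDclosed hDsub
  have hS'comp : IsCompact (L '' D) := hDcomp.image hLc
  -- (0,1) is in the closure of S ∩ ball, which is inside L '' D
  have hsub : S ∩ Metric.ball ((0 : Fin n → ℝ), (1:ℝ)) (1/2) ⊆ L '' D := by
    rintro p ⟨⟨x, hx, rfl⟩, hball⟩
    refine ⟨x, ⟨hx, ?_⟩, rfl⟩
    have hd : dist (∑ i, x i) (1:ℝ) < 1/2 := by
      have hd0 : dist (L x) ((0 : Fin n → ℝ), (1:ℝ)) < 1/2 := Metric.mem_ball.mp hball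
      rw [Prod.dist_eq] at hd0
      exact lt_of_le_of_lt (le_max_right _ _) hd0
    rw [Real.dist_eq] at hd
    have := abs_lt.mp hd
    linarith [this.1, this.2]
  have hA' : ((0 : Fin n → ℝ), (1:ℝ)) ∈
      closure (S ∩ Metric.ball ((0 : Fin n → ℝ), (1:ℝ)) (1/2)) := by
    rw [mem_closure_iff_nhds] at hA ⊢
    intro t ht
    have hb : Metric.ball ((0 : Fin n → ℝ), (1:ℝ)) (1/2) ∈
        nhds ((0 : Fin n → ℝ), (1:ℝ)) := Metric.ball_mem_nhds _ (by norm_num)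
    obtain ⟨p, hp⟩ := hA (t ∩ Metric.ball ((0 : Fin n → ℝ), (1:ℝ)) (1/2))
      (Filter.inter_mem ht hb)
    exact ⟨p, hp.1.1, hp.2, hp.1.2⟩
  have hmem : ((0 : Fin n → ℝ), (1:ℝ)) ∈ L '' D := by
    have := closure_mono hsub hA'
    rwa [hS'comp.isClosed.closure_eq] at this
  obtain ⟨P, hPD, hLP⟩ := hmem
  rw [hLapp] at hLP
  have h1 : K.mulVec P = 0 := congrArg Prod.fst hLP
  have h2 : ∑ i, P i = 1 := congrArg Prod.snd hLP
  exact ⟨P, hPD.1, h2, h1⟩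
end

section
/- Let q > 0 and K be the circulant matrix of the simple directed cycle with uniform weight q on n ≥ 3 nodes. Then the eigenvalue λ_1 = -q + q·exp(2πi/n) satisfies |Im λ_1| / |Re λ_1| = cot(π/n). In particular the bound |Im λ| ≤ cot(π/n)|Re λ| for Metzler matrices with zero column sums is sharp. -/
open Real Matrix Complex

private lemma pow_mod_eq {z : ℂ} {n : ℕ} (hz : z ^ n = 1) (a : ℕ) :
    z ^ (a % n) = z ^ a := by
  conv_rhs => rw [← Nat.div_add_mod a n]
  rw [pow_add, pow_mul, hz, one_pow, one_mul]

private lemma add_mod_left' (a b n : ℕ) : (a % n + b) % n = (a + b) % n := by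
  simp [Nat.add_mod]

theorem cycle_matrix_bound_sharp
    (n : ℕ) (hn : 3 ≤ n) (q : ℝ) (hq : 0 < q)
    (K : Matrix (Fin n) (Fin n) ℂ)
    (hK : ∀ i j : Fin n, K i j =
      if i = j then -(q : ℂ) else if (i : ℕ) = ((j : ℕ) + 1) % n then (q : ℂ) else 0) :
    (-(q : ℂ) + (q : ℂ) * Complex.exp (2 * Real.pi * Complex.I / (n : ℕ)))
        ∈ spectrum ℂ K ∧
      |(-(q : ℂ) + (q : ℂ) * Complex.exp (2 * Real.pi * Complex.I / (n : ℕ))).im| /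
        |(-(q : ℂ) + (q : ℂ) * Complex.exp (2 * Real.pi * Complex.I / (n : ℕ))).re| =
        Real.cot (Real.pi / n) := by
  have hn0 : (0:ℕ) < n := by omega
  have hnC : ((n:ℕ):ℂ) ≠ 0 := Nat.cast_ne_zero.mpr (by omega)
  set ω : ℂ := Complex.exp (2 * Real.pi * Complex.I / (n : ℕ)) with hω
  set ω' : ℂ := Complex.exp (-(2 * Real.pi * Complex.I / (n : ℕ))) with hω'
  set lam : ℂ := -(q : ℂ) + (q : ℂ) * ω with hlam
  have hωω' : ω * ω' = 1 := by
    rw [hω, hω', ← Complex.exp_add]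
    simp
  have hω'0 : ω' ≠ 0 := Complex.exp_ne_zero _
  have hω'n : ω' ^ n = 1 := by
    rw [hω', ← Complex.exp_nat_mul]
    rw [show (n:ℂ) * -(2 * Real.pi * Complex.I / (n : ℕ)) = -(2 * Real.pi * Complex.I) by
      field_simp]
    rw [Complex.exp_neg, Complex.exp_two_pi_mul_I, inv_one]
  have hω'pred : ω' ^ (n - 1) = ω := by
    have h1 : ω' ^ (n - 1) * ω' = ω * ω' := by
      rw [hωω', ← pow_succ, show n - 1 + 1 = n by omega, hω'n]
    exact mul_right_cancel₀ hω'0 h1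
  -- eigenvector
  set v : Fin n → ℂ := fun i => ω' ^ (i : ℕ) with hv
  have hmv : K.mulVec v = lam • v := by
    funext i
    set j₀ : Fin n := ⟨(i + (n - 1)) % n, Nat.mod_lt _ hn0⟩ with hj₀
    have hj₀succ : (((j₀:ℕ)) + 1) % n = i := by
      show (((i:ℕ) + (n - 1)) % n + 1) % n = i
      rw [add_mod_left', show (i:ℕ) + (n-1) + 1 = i + n by omega, Nat.add_mod_right,
        Nat.mod_eq_of_lt i.isLt]
    have hj₀i : j₀ ≠ i := by
      intro h
      rw [h] at hj₀succ
      rcases Nat.lt_or_ge ((i:ℕ)+1) n with h'|h'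
      · rw [Nat.mod_eq_of_lt h'] at hj₀succ; omega
      · have h2 : (i:ℕ) + 1 = n := by have := i.isLt; omega
        rw [h2, Nat.mod_self] at hj₀succ
        have := i.isLt; omega
    have hchar : ∀ j : Fin n, ((i:ℕ) = ((j:ℕ) + 1) % n) ↔ j = j₀ := by
      intro j
      constructor
      · intro h
        apply Fin.ext
        show (j:ℕ) = ((i:ℕ) + (n - 1)) % n
        rw [h, add_mod_left', show (j:ℕ) + 1 + (n-1) = j + n by omega, Nat.add_mod_right,
          Nat.mod_eq_of_lt j.isLt]
      · intro h
        subst h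
        exact hj₀succ.symm
    have hterm : ∀ j : Fin n, K i j * v j =
        (if j = i then -(q:ℂ) * v j else 0) + (if j = j₀ then (q:ℂ) * v j else 0) := by
      intro j
      rw [hK]
      by_cases h1 : i = j
      · subst h1
        simp [Ne.symm hj₀i]
      · rw [if_neg h1, if_neg (show ¬ j = i from fun h => h1 h.symm), zero_add]
        by_cases h2 : (i:ℕ) = ((j:ℕ) + 1) % n
        · rw [if_pos h2, if_pos ((hchar j).mp h2)]
        · rw [if_neg h2, if_neg (fun h => h2 ((hchar j).mpr h)), zero_mul]
    have hsum : K.mulVec v i = -(q:ℂ) * v i + (q:ℂ) * v j₀ := by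
      unfold Matrix.mulVec dotProduct
      rw [Finset.sum_congr rfl (fun j _ => hterm j), Finset.sum_add_distrib,
        Finset.sum_ite_eq' Finset.univ i (fun j => -(q:ℂ) * v j),
        Finset.sum_ite_eq' Finset.univ j₀ (fun j => (q:ℂ) * v j)]
      simp
    rw [hsum]
    have hvj₀ : v j₀ = ω * v i := by
      show ω' ^ (((i:ℕ) + (n-1)) % n) = ω * ω' ^ (i:ℕ)
      rw [pow_mod_eq hω'n, pow_add, hω'pred]
      ring
    rw [hvj₀]
    show -(q:ℂ) * v i + (q:ℂ) * (ω * v i) = lam * v i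
    rw [hlam]; ring
  constructor
  · -- spectrum membership
    rw [spectrum.mem_iff]
    intro hU
    have hzero : (algebraMap ℂ (Matrix (Fin n) (Fin n) ℂ) lam - K).mulVec v = 0 := by
      rw [Matrix.sub_mulVec, hmv]
      funext i
      simp [Matrix.mulVec, dotProduct, Matrix.algebraMap_matrix_apply,
        Finset.sum_ite_eq, mul_comm]
    set M := algebraMap ℂ (Matrix (Fin n) (Fin n) ℂ) lam - K with hM
    have hv0 : v = 0 := by
      have h1 : M⁻¹ * M = 1 := Matrix.nonsing_inv_mul M
        ((Matrix.isUnit_iff_isUnit_det M).mp hU)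
      calc v = (M⁻¹ * M).mulVec v := by rw [h1, Matrix.one_mulVec]
        _ = M⁻¹.mulVec (M.mulVec v) := by rw [Matrix.mulVec_mulVec]
        _ = 0 := by rw [hzero, Matrix.mulVec_zero]
    have : v ⟨0, by omega⟩ = 1 := by simp [hv]
    rw [hv0] at this
    simp at this
  · -- ratio computation
    have harg : ω = Complex.exp (((2 * Real.pi / n : ℝ) : ℂ) * Complex.I) := by
      rw [hω]
      congr 1
      push_cast
      ring
    have h2 : ω.re = Real.cos (2 * Real.pi / n) := by
      rw [harg]; exact Complex.exp_ofReal_mul_I_re _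
    have h3 : ω.im = Real.sin (2 * Real.pi / n) := by
      rw [harg]; exact Complex.exp_ofReal_mul_I_im _
    have hre : lam.re = q * Real.cos (2 * Real.pi / n) - q := by
      rw [hlam]
      simp only [Complex.add_re, Complex.neg_re, Complex.ofReal_re, Complex.mul_re,
        Complex.ofReal_im, h2, h3]
      ring
    have him : lam.im = q * Real.sin (2 * Real.pi / n) := by
      rw [hlam]
      simp only [Complex.add_im, Complex.neg_im, Complex.ofReal_im, Complex.mul_im,
        Complex.ofReal_re, h2, h3]
      ring
    show |lam.im| / |lam.re| = Real.cot (Real.pi / n)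
    rw [hre, him]
    set x := Real.pi / n with hx
    have hx0 : 0 < x := div_pos Real.pi_pos (by positivity)
    have hx3 : x ≤ Real.pi / 3 := by
      apply div_le_div_of_nonneg_left Real.pi_pos.le (by norm_num)
      exact_mod_cast hn
    have hxlt : x < Real.pi / 2 := lt_of_le_of_lt hx3 (by
      have := Real.pi_pos; linarith)
    have hsin : 0 < Real.sin x := Real.sin_pos_of_pos_of_lt_pi hx0 (by
      have := Real.pi_pos; linarith [hxlt])
    have hcos : 0 < Real.cos x := Real.cos_pos_of_mem_Ioo ⟨by linarith [Real.pi_pos], hxlt⟩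
    have h2x : 2 * Real.pi / n = 2 * x := by rw [hx]; ring
    rw [h2x, Real.sin_two_mul, Real.cos_two_mul]
    have hs2 : Real.cos x ^ 2 = 1 - Real.sin x ^ 2 := by
      have := Real.sin_sq_add_cos_sq x; linarith
    rw [hs2]
    rw [show q * (2 * Real.sin x * Real.cos x) = 2 * q * Real.sin x * Real.cos x by ring,
      show q * (2 * (1 - Real.sin x ^ 2) - 1) - q = -(2 * q * Real.sin x * Real.sin x) by
        ring]
    rw [abs_neg, abs_of_pos (by positivity), abs_of_pos (by positivity),
      Real.cot_eq_cos_div_sin]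
    field_simp
end

section
/- Consider two FitzHugh–Nagumo systems in leader–follower configuration: ż₁ = α(y₁ - βz₁), ẏ₁ = y₁ - γy₁³ - z₁; ż₂ = α(y₂ - βz₂), ẏ₂ = y₂ - γy₂³ - z₂ + σ(y₁ - y₂), with α, β, γ > 0. Let z̃ = z₁ - z₂, ỹ = y₁ - y₂ and V = (1/2)(z̃²/α + ỹ²). Then along solutions, dV/dt = -β z̃² + (1-σ) ỹ² - (γ/4) ỹ² (3(y₁+y₂)² + ỹ²). In particular if σ > 1 then dV/dt ≤ -min(αβ·2, 2(σ-1))·V ≤ 0 with equality only when z̃ = ỹ = 0. -/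
open Real

theorem fhn_leader_follower_lyapunov
    (α β γ σ : ℝ) (hα : 0 < α) (hβ : 0 < β) (hγ : 0 < γ) (hσ : 0 < σ)
    (z₁ y₁ z₂ y₂ : ℝ → ℝ)
    (hz₁ : ∀ t, HasDerivAt z₁ (α * (y₁ t - β * z₁ t)) t)
    (hy₁ : ∀ t, HasDerivAt y₁ (y₁ t - γ * (y₁ t) ^ 3 - z₁ t) t)
    (hz₂ : ∀ t, HasDerivAt z₂ (α * (y₂ t - β * z₂ t)) t)
    (hy₂ : ∀ t, HasDerivAt y₂
      (y₂ t - γ * (y₂ t) ^ 3 - z₂ t + σ * (y₁ t - y₂ t)) t) :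
    (∀ t, HasDerivAt (fun s => (1 / 2) * ((z₁ s - z₂ s) ^ 2 / α + (y₁ s - y₂ s) ^ 2))
      (-β * (z₁ t - z₂ t) ^ 2 + (1 - σ) * (y₁ t - y₂ t) ^ 2 -
        (γ / 4) * (y₁ t - y₂ t) ^ 2 *
          (3 * (y₁ t + y₂ t) ^ 2 + (y₁ t - y₂ t) ^ 2)) t) ∧
    (1 < σ → ∀ t,
      (-β * (z₁ t - z₂ t) ^ 2 + (1 - σ) * (y₁ t - y₂ t) ^ 2 -
          (γ / 4) * (y₁ t - y₂ t) ^ 2 *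
            (3 * (y₁ t + y₂ t) ^ 2 + (y₁ t - y₂ t) ^ 2) ≤
        -(min (2 * (α * β)) (2 * (σ - 1))) *
          ((1 / 2) * ((z₁ t - z₂ t) ^ 2 / α + (y₁ t - y₂ t) ^ 2))) ∧
      (-(min (2 * (α * β)) (2 * (σ - 1))) *
          ((1 / 2) * ((z₁ t - z₂ t) ^ 2 / α + (y₁ t - y₂ t) ^ 2)) ≤ 0) ∧
      (-β * (z₁ t - z₂ t) ^ 2 + (1 - σ) * (y₁ t - y₂ t) ^ 2 -
          (γ / 4) * (y₁ t - y₂ t) ^ 2 *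
            (3 * (y₁ t + y₂ t) ^ 2 + (y₁ t - y₂ t) ^ 2) = 0 →
        z₁ t - z₂ t = 0 ∧ y₁ t - y₂ t = 0)) := by
  constructor
  · intro t
    have hz : HasDerivAt (fun s => z₁ s - z₂ s)
        (α * (y₁ t - β * z₁ t) - α * (y₂ t - β * z₂ t)) t := (hz₁ t).sub (hz₂ t)
    have hy : HasDerivAt (fun s => y₁ s - y₂ s)
        ((y₁ t - γ * (y₁ t) ^ 3 - z₁ t) -
          (y₂ t - γ * (y₂ t) ^ 3 - z₂ t + σ * (y₁ t - y₂ t))) t := (hy₁ t).sub (hy₂ t)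
    have h := (((hz.pow 2).div_const α).add (hy.pow 2)).const_mul (1 / 2 : ℝ)
    refine h.congr_deriv ?_
    field_simp [hα.ne']
    ring
  · intro hσ1 t
    have hV : 0 ≤ (z₁ t - z₂ t) ^ 2 / α + (y₁ t - y₂ t) ^ 2 := by positivity
    have hm : 0 < min (2 * (α * β)) (2 * (σ - 1)) := by
      apply lt_min <;> nlinarith
    refine ⟨?_, ?_, ?_⟩
    · have h1 : min (2 * (α * β)) (2 * (σ - 1)) ≤ 2 * (α * β) := min_le_left _ _
      have h2 : min (2 * (α * β)) (2 * (σ - 1)) ≤ 2 * (σ - 1) := min_le_right _ _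
      have hz2 : (0:ℝ) ≤ (z₁ t - z₂ t) ^ 2 / α := by positivity
      have hy2 : (0:ℝ) ≤ (y₁ t - y₂ t) ^ 2 := sq_nonneg _
      have hγT : 0 ≤ (γ / 4) * (y₁ t - y₂ t) ^ 2 *
          (3 * (y₁ t + y₂ t) ^ 2 + (y₁ t - y₂ t) ^ 2) := by positivity
      have hA : min (2 * (α * β)) (2 * (σ - 1)) * ((z₁ t - z₂ t) ^ 2 / α) ≤
          2 * β * (z₁ t - z₂ t) ^ 2 := by
        have := mul_le_mul_of_nonneg_right h1 hz2
        calc min (2 * (α * β)) (2 * (σ - 1)) * ((z₁ t - z₂ t) ^ 2 / α)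
            ≤ 2 * (α * β) * ((z₁ t - z₂ t) ^ 2 / α) := this
          _ = 2 * β * (z₁ t - z₂ t) ^ 2 := by field_simp
      have hB := mul_le_mul_of_nonneg_right h2 hy2
      nlinarith [hA, hB]
    · nlinarith
    · intro heq
      have hβz : 0 ≤ β * (z₁ t - z₂ t) ^ 2 := by positivity
      have hσy : 0 ≤ (σ - 1) * (y₁ t - y₂ t) ^ 2 := by nlinarith [sq_nonneg (y₁ t - y₂ t)]
      have hγT : 0 ≤ (γ / 4) * (y₁ t - y₂ t) ^ 2 *
          (3 * (y₁ t + y₂ t) ^ 2 + (y₁ t - y₂ t) ^ 2) := by positivity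
      have hz0 : β * (z₁ t - z₂ t) ^ 2 = 0 := by linarith
      have hy0 : (σ - 1) * (y₁ t - y₂ t) ^ 2 = 0 := by linarith
      constructor
      · have : (z₁ t - z₂ t) ^ 2 = 0 := by
          rcases mul_eq_zero.mp hz0 with h | h
          · exact absurd h hβ.ne'
          · exact h
        exact pow_eq_zero_iff (by norm_num) |>.mp this
      · have : (y₁ t - y₂ t) ^ 2 = 0 := by
          rcases mul_eq_zero.mp hy0 with h | h
          · exact absurd h (by linarith)
          · exact h
        exact pow_eq_zero_iff (by norm_num) |>.mp this
end
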